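/- Let n ≥ 5, let M be a matching of the hypercube Q_n, and let u be a vertex of Q_n. Assume Conjecture B holds for dimension n. Then |T^M_u| ≥ 2^{n-2}. Moreover, |T^M_u| = 2^{n-2} if and only if M contains a half-layer H covering u, in which case T^M_u is exactly the set of vertices of parity opposite to u that are not covered by H; otherwise |T^M_u| ≥ 2^{n-1} − 2. -/

import Mathlib

open SimpleGraph

/-- The hypercube graph `Q_n` on binary strings of length `n`:
two strings are adjacent iff they differ in exactly one coordinate. -/
def Qc (n : ℕ) : SimpleGraph (Fin n → Bool) where
  Adj u v := (Finset.univ.filter fun i => u i ≠ v i).card = 1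
  symm := by
    constructor
    intro u v h
    beta_reduce at h ⊢
    have hset : (Finset.univ.filter fun i => v i ≠ u i)
        = (Finset.univ.filter fun i => u i ≠ v i) :=
      Finset.filter_congr (fun i _ => by simp [ne_comm])
    rw [hset]; exact h
  loopless := by
    constructor
    intro u h
    simp at h

/-- The parity (weight mod 2) of a vertex of the hypercube. -/
def wt {n : ℕ} (u : Fin n → Bool) : ZMod 2 :=
  ((Finset.univ.filter fun i => u i = true).card : ZMod 2)

/-- The neighbor of `u` obtained by flipping coordinate `i`. -/
def flipCoord {n : ℕ} (u : Fin n → Bool) (i : Fin n) : Fin n → Bool :=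
  Function.update u i (!u i)

/-- `M` is a matching of the graph `G`: a set of pairwise non-incident edges of `G`. -/
def IsMatchingOn {V : Type*} (G : SimpleGraph V) (M : Set (Sym2 V)) : Prop :=
  M ⊆ G.edgeSet ∧ ∀ e ∈ M, ∀ f ∈ M, e ≠ f → ∀ v : V, v ∈ e → v ∉ f

/-- A vertex is covered by a set of edges if it is an endpoint of one of them. -/
def coveredBy {V : Type*} (M : Set (Sym2 V)) (v : V) : Prop :=
  ∃ e ∈ M, v ∈ e

/-- There is a Hamilton path of `G` between `u` and `v` whose edge set contains `M`. -/
def ExtendsHamPath {V : Type*} [DecidableEq V] (G : SimpleGraph V) (M : Set (Sym2 V)) (u v : V) : Prop :=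
  ∃ p : G.Walk u v, p.IsHamiltonian ∧ ∀ e ∈ M, e ∈ p.edges

/-- There is a Hamilton cycle of `G` whose edge set contains `M`. -/
def ExtendsHamCycle {V : Type*} [DecidableEq V] (G : SimpleGraph V) (M : Set (Sym2 V)) : Prop :=
  ∃ (a : V) (c : G.Walk a a), c.IsHamiltonianCycle ∧ ∀ e ∈ M, e ∈ c.edges

/-- The set of directions (coordinates where the endpoints differ) of an edge. -/
def edgeDirs {n : ℕ} (e : Sym2 (Fin n → Bool)) : Finset (Fin n) :=
  Sym2.lift ⟨fun u v => Finset.univ.filter fun i => u i ≠ v i, fun u v =>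
    Finset.filter_congr (fun i _ => by simp [ne_comm])⟩ e

/-- The edges of `M` lie in at most `d` distinct directions. -/
def SpansAtMost {n : ℕ} (M : Set (Sym2 (Fin n → Bool))) (d : ℕ) : Prop :=
  ∃ D : Finset (Fin n), D.card ≤ d ∧ ∀ e ∈ M, edgeDirs e ⊆ D

/-- The half-layer in direction `i` of parity `p`: all edges of `Q_n` in direction `i`
whose base (the endpoint with `i`-th coordinate `false`) has parity `p`. -/
def halfLayer (n : ℕ) (i : Fin n) (p : ZMod 2) : Set (Sym2 (Fin n → Bool)) :=
  {e | ∃ u : Fin n → Bool, u i = false ∧ wt u = p ∧ e = s(u, flipCoord u i)}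

/-- Condition C1: `M` contains a half-layer covering both `u` and `v`. -/
def CondC1 {n : ℕ} (M : Set (Sym2 (Fin n → Bool))) (u v : Fin n → Bool) : Prop :=
  ∃ (i : Fin n) (p : ZMod 2), halfLayer n i p ⊆ M ∧
    coveredBy (halfLayer n i p) u ∧ coveredBy (halfLayer n i p) v

/-- Condition C2: `v = u^i`, `M` contains a `u`-avoiding almost half-layer in direction `i`,
and there is `j ≠ i` with `u u^j ∈ M` and `v v^j ∈ M`. -/
def CondC2 {n : ℕ} (M : Set (Sym2 (Fin n → Bool))) (u v : Fin n → Bool) : Prop :=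
  ∃ i : Fin n, v = flipCoord u i ∧
    (∃ (p : ZMod 2) (e₀ : Sym2 (Fin n → Bool)), e₀ ∈ halfLayer n i p ∧ u ∈ e₀ ∧
      halfLayer n i p \ {e₀} ⊆ M) ∧
    ∃ j : Fin n, j ≠ i ∧ s(u, flipCoord u j) ∈ M ∧ s(v, flipCoord v j) ∈ M

/-- Condition C3: `uv ∈ M`. -/
def CondC3 {n : ℕ} (M : Set (Sym2 (Fin n → Bool))) (u v : Fin n → Bool) : Prop :=
  s(u, v) ∈ M

/-- None of the C-conditions holds for `M`, `u`, `v`. -/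
def NoneC {n : ℕ} (M : Set (Sym2 (Fin n → Bool))) (u v : Fin n → Bool) : Prop :=
  ¬ CondC1 M u v ∧ ¬ CondC2 M u v ∧ ¬ CondC3 M u v

/-- Conjecture A for dimension `d`: for every matching `M` of `Q_d` and vertices `u`, `v`
of opposite parity with `u` not covered by `M`, there is a Hamilton path between `u` and `v`
extending `M`. -/
def ConjA (d : ℕ) : Prop :=
  ∀ M : Set (Sym2 (Fin d → Bool)), IsMatchingOn (Qc d) M →
    ∀ u v : Fin d → Bool, wt u ≠ wt v → ¬ coveredBy M u →
      ExtendsHamPath (Qc d) M u v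

/-- Conjecture B for dimension `d`: for every matching `M` of `Q_d` and vertices `u`, `v`
of opposite parity, a Hamilton path between `u` and `v` extending `M` exists iff none of
the C-conditions holds. -/
def ConjB (d : ℕ) : Prop :=
  ∀ M : Set (Sym2 (Fin d → Bool)), IsMatchingOn (Qc d) M →
    ∀ u v : Fin d → Bool, wt u ≠ wt v →
      (ExtendsHamPath (Qc d) M u v ↔ NoneC M u v)

/-- There exist at least two distinct Hamilton paths of `G` between `u` and `v`
extending `M`. -/
def TwoHamPaths {V : Type*} [DecidableEq V] (G : SimpleGraph V) (M : Set (Sym2 V)) (u v : V) : Prop :=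
  ∃ p₁ p₂ : G.Walk u v, p₁.IsHamiltonian ∧ (∀ e ∈ M, e ∈ p₁.edges) ∧
    p₂.IsHamiltonian ∧ (∀ e ∈ M, e ∈ p₂.edges) ∧ p₁ ≠ p₂

/-- Conjecture C for dimension `d`: none of the C-conditions holds iff there exist two
distinct Hamilton paths between `u` and `v` extending `M`. -/
def ConjC (d : ℕ) : Prop :=
  ∀ M : Set (Sym2 (Fin d → Bool)), IsMatchingOn (Qc d) M →
    ∀ u v : Fin d → Bool, wt u ≠ wt v →
      (NoneC M u v ↔ TwoHamPaths (Qc d) M u v)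

/-- The copy of a set of edges of `Q_d` inside the `i`-th canonical copy of `Q_d`
in `P_m □ Q_d`. -/
def liftEdges {m d : ℕ} (i : Fin m) (M : Set (Sym2 (Fin d → Bool))) :
    Set (Sym2 (Fin m × (Fin d → Bool))) :=
  (Sym2.map fun x => (i, x)) '' M

/-- The global parity of a vertex of `P_m □ Q_d`. -/
def gwt {m d : ℕ} (v : Fin m × (Fin d → Bool)) : ZMod 2 :=
  (v.1.val : ZMod 2) + wt v.2

/-- The sequence of half-layers of `P_m □ Q_d` in direction `k` of global parity `p`:
all edges of the canonical copies lying in direction `k` whose base has global parity `p`. -/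
def seqHalfLayer (m d : ℕ) (k : Fin d) (p : ZMod 2) :
    Set (Sym2 (Fin m × (Fin d → Bool))) :=
  {e | ∃ (i : Fin m) (x : Fin d → Bool), x k = false ∧ gwt (i, x) = p ∧
    e = s((i, x), (i, flipCoord x k))}

/-- `M` is a maximal matching of `G`. -/
def IsMaximalMatchingOn {V : Type*} (G : SimpleGraph V) (M : Set (Sym2 V)) : Prop :=
  IsMatchingOn G M ∧ ∀ e : Sym2 V, IsMatchingOn G (insert e M) → e ∈ M

/-- The set `(M \ {uu^M, vv^M}) ∪ {u^M v^M}`, where the removed edges are those of `M`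
incident to `u` or `v`, and the edge `u^M v^M` is present exactly when both `u` and `v`
are covered by `M`. -/
def reducedM {n : ℕ} (M : Set (Sym2 (Fin n → Bool))) (u v : Fin n → Bool) :
    Set (Sym2 (Fin n → Bool)) :=
  {e | e ∈ M ∧ u ∉ e ∧ v ∉ e} ∪
    {f | ∃ a b : Fin n → Bool, s(u, a) ∈ M ∧ s(v, b) ∈ M ∧ f = s(a, b)}

/-- The complete bipartite graph `B(Q_n)` on the vertices of `Q_n`: two vertices are
adjacent iff they have opposite parity. -/
def Bgraph (n : ℕ) : SimpleGraph (Fin n → Bool) where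
  Adj u v := wt u ≠ wt v
  symm := ⟨fun _ _ h => h.symm⟩
  loopless := ⟨fun _ h => h rfl⟩

/-!
By Conjecture B, `T^M_u` consists of the vertices `v` of parity opposite to `u` for which no
C-condition holds. Condition C3 excludes at most the `M`-partner of `u`, and C2 at most one
neighbour `u^i`: two `u`-avoiding almost half-layers of `M` in different directions `i₁, i₂`
are impossible once `n ≥ 4`, because a vertex `w ≠ u` agreeing with `u` in the coordinates
`i₁, i₂` and in parity would be matched in both directions.

If some half-layer `H ⊆ M` covers `u`, the matching property forces every C-condition to be
witnessed by `H` itself, so `T^M_u` is the set of opposite-parity vertices not covered by `H`,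
i.e. those agreeing with `u` in the direction of `H`: there are `2^{n-2}` of them. Otherwise C1
fails for every `v`, leaving at least `2^{n-1} - 2` vertices, which exceeds `2^{n-2}`.
-/

section Cube

variable {n : ℕ}

lemma flipCoord_apply (u : Fin n → Bool) (i j : Fin n) :
    flipCoord u i j = if j = i then !u i else u j := by
  simp [flipCoord, Function.update]

@[simp] lemma flipCoord_apply_self (u : Fin n → Bool) (i : Fin n) :
    flipCoord u i i = !u i := by simp [flipCoord_apply]

lemma flipCoord_apply_of_ne (u : Fin n → Bool) {i j : Fin n} (h : j ≠ i) :
    flipCoord u i j = u j := by simp [flipCoord_apply, h]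

@[simp] lemma flipCoord_flipCoord (u : Fin n → Bool) (i : Fin n) :
    flipCoord (flipCoord u i) i = u := by
  funext j
  by_cases h : j = i
  · subst h; simp
  · rw [flipCoord_apply_of_ne _ h, flipCoord_apply_of_ne _ h]

lemma flipCoord_involutive (i : Fin n) : Function.Involutive (flipCoord · i) :=
  fun u => flipCoord_flipCoord u i

lemma eq_of_flipCoord_eq_flipCoord {u : Fin n → Bool} {i j : Fin n}
    (h : flipCoord u i = flipCoord u j) : i = j := by
  by_contra hij
  simpa [flipCoord_apply_of_ne _ hij] using congrFun h i

lemma wt_flipCoord_of_eq_false (u : Fin n → Bool) {i : Fin n} (h : u i = false) :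
    wt (flipCoord u i) = wt u + 1 := by
  have hins : (Finset.univ.filter fun j => flipCoord u i j = true)
      = insert i (Finset.univ.filter fun j => u j = true) := by
    ext j
    by_cases hj : j = i
    · subst hj; simp [h]
    · simp [flipCoord_apply_of_ne _ hj, hj]
  rw [wt, wt, hins, Finset.card_insert_of_notMem (by simp [h])]
  push_cast
  ring

@[simp] lemma wt_flipCoord (u : Fin n → Bool) (i : Fin n) :
    wt (flipCoord u i) = wt u + 1 := by
  cases h : u i
  · exact wt_flipCoord_of_eq_false u h
  · have h' := wt_flipCoord_of_eq_false (flipCoord u i) (i := i) (by simp [h])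
    rw [flipCoord_flipCoord] at h'
    rw [h', add_assoc, CharTwo.add_self_eq_zero, add_zero]

lemma exists_eq_flipCoord_of_adj {u v : Fin n → Bool} (h : (Qc n).Adj u v) :
    ∃ i, v = flipCoord u i := by
  obtain ⟨i, hi⟩ := Finset.card_eq_one.mp h
  have hdiff : ∀ j, u j ≠ v j ↔ j = i := fun j => by
    simpa using Finset.ext_iff.mp hi j
  refine ⟨i, funext fun j => ?_⟩
  by_cases hj : j = i
  · subst hj
    have := (hdiff j).mpr rfl
    revert this; rw [flipCoord_apply_self]; cases u j <;> cases v j <;> simp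
  · rw [flipCoord_apply_of_ne _ hj]
    exact (not_not.mp (mt (hdiff j).mp hj)).symm

lemma wt_eq_add_length {u v : Fin n → Bool} (p : (Qc n).Walk u v) :
    wt v = wt u + p.length := by
  induction p with
  | nil => simp
  | cons h _ ih =>
    obtain ⟨i, rfl⟩ := exists_eq_flipCoord_of_adj h
    rw [ih, wt_flipCoord, SimpleGraph.Walk.length_cons]
    push_cast
    ring

/-- Hamilton paths of `Q_n` have odd length `2 ^ n - 1`. -/
lemma wt_eq_add_one_of_isHamiltonian (hn : n ≠ 0) {u v : Fin n → Bool}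
    {p : (Qc n).Walk u v} (hp : p.IsHamiltonian) : wt v = wt u + 1 := by
  rw [wt_eq_add_length p, hp.length_eq, Fintype.card_fun, Fintype.card_bool,
    Fintype.card_fin, Nat.cast_sub Nat.one_le_two_pow, Nat.cast_pow,
    show ((2 : ℕ) : ZMod 2) = 0 from rfl, zero_pow hn]
  rfl

end Cube

lemma Set.ncard_inter_mul_two_of_involutive {α : Type*} [Finite α] {σ : α → α}
    (hσ : Function.Involutive σ) {s t : Set α} (hs : ∀ a, σ a ∈ s ↔ a ∈ s)
    (ht : ∀ a, σ a ∈ t ↔ a ∉ t) : (s ∩ t).ncard * 2 = s.ncard := by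
  have himage : σ '' (s ∩ t) = s \ t := by
    ext a
    rw [hσ.image_eq_preimage_symm]
    simp only [Set.mem_preimage, Set.mem_inter_iff, Set.mem_sdiff, hs, ht]
  rw [← Set.ncard_inter_add_ncard_sdiff_eq_ncard s t, ← himage,
    Set.ncard_image_of_injective _ hσ.injective, mul_two]

lemma ZMod.add_one_ne_iff_eq (a q : ZMod 2) : a + 1 ≠ q ↔ a = q := by
  revert a q; decide

section Counting

variable {n : ℕ}

lemma ncard_setOf_apply_eq (i : Fin n) (c : Bool) :
    {v : Fin n → Bool | v i = c}.ncard = 2 ^ (n - 1) := by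
  obtain ⟨m, rfl⟩ : ∃ m, n = m + 1 := ⟨n - 1, by have := i.2; omega⟩
  have h := Set.ncard_inter_mul_two_of_involutive (flipCoord_involutive i)
    (s := Set.univ) (t := {v | v i = c}) (fun _ => Iff.rfl)
    (fun v => by cases c <;> cases v i <;> simp [*])
  rw [Set.univ_inter, Set.ncard_univ, Nat.card_eq_fintype_card, Fintype.card_fun,
    Fintype.card_bool, Fintype.card_fin, pow_succ] at h
  exact Nat.eq_of_mul_eq_mul_right two_pos h

lemma ncard_setOf_wt_ne (hn : n ≠ 0) (q : ZMod 2) :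
    {v : Fin n → Bool | wt v ≠ q}.ncard = 2 ^ (n - 1) := by
  obtain ⟨m, rfl⟩ : ∃ m, n = m + 1 := ⟨n - 1, by omega⟩
  have h := Set.ncard_inter_mul_two_of_involutive (flipCoord_involutive (0 : Fin (m + 1)))
    (s := Set.univ) (t := {v | wt v ≠ q}) (fun _ => Iff.rfl)
    (fun v => by simp [ZMod.add_one_ne_iff_eq])
  rw [Set.univ_inter, Set.ncard_univ, Nat.card_eq_fintype_card, Fintype.card_fun,
    Fintype.card_bool, Fintype.card_fin, pow_succ] at h
  exact Nat.eq_of_mul_eq_mul_right two_pos h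

lemma ncard_setOf_apply_eq_and_wt_ne {i k : Fin n} (hki : k ≠ i) (c : Bool) (q : ZMod 2) :
    {v : Fin n → Bool | v i = c ∧ wt v ≠ q}.ncard = 2 ^ (n - 2) := by
  have h := Set.ncard_inter_mul_two_of_involutive (flipCoord_involutive k)
    (s := {v | v i = c}) (t := {v | wt v ≠ q})
    (fun v => by simp [flipCoord_apply_of_ne _ hki.symm])
    (fun v => by simp [ZMod.add_one_ne_iff_eq])
  obtain ⟨m, rfl⟩ : ∃ m, n = m + 2 := ⟨n - 2, by have := k.2; have := i.2; omega⟩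
  rw [ncard_setOf_apply_eq, show m + 2 - 1 = m + 1 by omega, pow_succ] at h
  exact Nat.eq_of_mul_eq_mul_right two_pos h

end Counting

lemma IsMatchingOn.eq_of_mem_of_mem {V : Type*} {G : SimpleGraph V} {M : Set (Sym2 V)}
    (hM : IsMatchingOn G M) {e f : Sym2 V} (he : e ∈ M) (hf : f ∈ M) {w : V}
    (hwe : w ∈ e) (hwf : w ∈ f) : e = f :=
  by_contra fun hne => hM.2 e he f hf hne w hwe hwf

lemma IsMatchingOn.eq_of_mk_mem {V : Type*} {G : SimpleGraph V} {M : Set (Sym2 V)}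
    (hM : IsMatchingOn G M) {u v w : V} (hv : s(u, v) ∈ M) (hw : s(u, w) ∈ M) : v = w :=
  Sym2.congr_right.mp (hM.eq_of_mem_of_mem hv hw (Sym2.mem_mk_left _ _) (Sym2.mem_mk_left _ _))

section HalfLayer

variable {n : ℕ} {i : Fin n} {p : ZMod 2}

lemma eq_of_mem_halfLayer {e : Sym2 (Fin n → Bool)} {w : Fin n → Bool}
    (he : e ∈ halfLayer n i p) (hw : w ∈ e) : e = s(w, flipCoord w i) := by
  obtain ⟨b, -, -, rfl⟩ := he
  rcases Sym2.mem_iff.mp hw with rfl | rfl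
  · rfl
  · rw [flipCoord_flipCoord, Sym2.eq_swap]

lemma mk_flipCoord_mem_halfLayer_iff {w : Fin n → Bool} :
    s(w, flipCoord w i) ∈ halfLayer n i p ↔ wt w = p + ((w i).toNat : ZMod 2) := by
  constructor
  · rintro ⟨b, hb, rfl, he⟩
    rcases Sym2.eq_iff.mp he with ⟨rfl, -⟩ | ⟨rfl, -⟩
    · simp [hb]
    · simp [hb]
  · intro h
    cases hw : w i
    · exact ⟨w, hw, by simpa [hw] using h, rfl⟩
    · refine ⟨flipCoord w i, by simp [hw], ?_, by rw [flipCoord_flipCoord, Sym2.eq_swap]⟩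
      rw [wt_flipCoord, h, hw, Bool.toNat_true, Nat.cast_one, add_assoc,
        CharTwo.add_self_eq_zero, add_zero]

lemma coveredBy_halfLayer_iff {w : Fin n → Bool} :
    coveredBy (halfLayer n i p) w ↔ wt w = p + ((w i).toNat : ZMod 2) :=
  ⟨fun ⟨_, he, hw⟩ => mk_flipCoord_mem_halfLayer_iff.mp (eq_of_mem_halfLayer he hw ▸ he),
    fun h => ⟨_, mk_flipCoord_mem_halfLayer_iff.mpr h, Sym2.mem_mk_left _ _⟩⟩

lemma eq_and_eq_of_mem_halfLayer_of_mem_halfLayer {j : Fin n} {q : ZMod 2}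
    {e : Sym2 (Fin n → Bool)} (h₁ : e ∈ halfLayer n i p) (h₂ : e ∈ halfLayer n j q) :
    i = j ∧ p = q := by
  obtain ⟨w, hw⟩ : ∃ w, w ∈ e := by
    obtain ⟨b, -, -, rfl⟩ := h₁
    exact ⟨b, Sym2.mem_mk_left _ _⟩
  have e₁ := eq_of_mem_halfLayer h₁ hw
  obtain rfl := eq_of_flipCoord_eq_flipCoord
    (Sym2.congr_right.mp (e₁.symm.trans (eq_of_mem_halfLayer h₂ hw)))
  rw [e₁, mk_flipCoord_mem_halfLayer_iff] at h₁ h₂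
  exact ⟨rfl, add_right_cancel (h₁.symm.trans h₂)⟩

def ContainsAvoidingAlmostHalfLayer (M : Set (Sym2 (Fin n → Bool))) (u : Fin n → Bool)
    (i : Fin n) : Prop :=
  ∃ (p : ZMod 2) (e₀ : Sym2 (Fin n → Bool)), e₀ ∈ halfLayer n i p ∧ u ∈ e₀ ∧
    halfLayer n i p \ {e₀} ⊆ M

variable {M : Set (Sym2 (Fin n → Bool))} {u : Fin n → Bool}

lemma containsAvoidingAlmostHalfLayer_of_subset (hsub : halfLayer n i p ⊆ M)
    (hu : coveredBy (halfLayer n i p) u) : ContainsAvoidingAlmostHalfLayer M u i :=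
  let ⟨e, he, hue⟩ := hu
  ⟨p, e, he, hue, Set.sdiff_subset.trans hsub⟩

lemma ContainsAvoidingAlmostHalfLayer.mk_flipCoord_mem
    (h : ContainsAvoidingAlmostHalfLayer M u i) {w : Fin n → Bool} (hwi : w i = u i)
    (hwt : wt w = wt u) (hwu : w ≠ u) : s(w, flipCoord w i) ∈ M := by
  obtain ⟨p, e₀, he₀, hu, hsub⟩ := h
  have he₀u := eq_of_mem_halfLayer he₀ hu
  refine hsub ⟨mk_flipCoord_mem_halfLayer_iff.mpr ?_, ?_⟩
  · rw [hwt, hwi]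
    exact mk_flipCoord_mem_halfLayer_iff.mp (he₀u ▸ he₀)
  · rw [Set.mem_singleton_iff, he₀u]
    intro he
    rcases Sym2.eq_iff.mp he with ⟨h, -⟩ | ⟨h, -⟩
    · exact hwu h
    · simpa [hwi] using congrFun h i

lemma ContainsAvoidingAlmostHalfLayer.unique (hn : 4 ≤ n) (hM : IsMatchingOn (Qc n) M)
    {i₁ i₂ : Fin n} (h₁ : ContainsAvoidingAlmostHalfLayer M u i₁)
    (h₂ : ContainsAvoidingAlmostHalfLayer M u i₂) : i₁ = i₂ := by
  by_contra hne
  obtain ⟨k, hk, l, hl, hkl⟩ : ∃ k ∈ ({i₁, i₂}ᶜ : Finset (Fin n)),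
      ∃ l ∈ ({i₁, i₂}ᶜ : Finset (Fin n)), k ≠ l := by
    apply Finset.one_lt_card.mp
    rw [Finset.card_compl, Fintype.card_fin, Finset.card_pair hne]
    omega
  simp only [Finset.mem_compl, Finset.mem_insert, Finset.mem_singleton, not_or] at hk hl
  set w := flipCoord (flipCoord u k) l with hw_def
  have hw : ∀ j, j ≠ k → j ≠ l → w j = u j := fun j hjk hjl => by
    rw [hw_def, flipCoord_apply_of_ne _ hjl, flipCoord_apply_of_ne _ hjk]
  have hwt : wt w = wt u := by
    rw [wt_flipCoord, wt_flipCoord, add_assoc, CharTwo.add_self_eq_zero, add_zero]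
  have hwu : w ≠ u := fun h => by
    simpa [w, flipCoord_apply_of_ne _ hkl] using congrFun h k
  have e₁ := h₁.mk_flipCoord_mem (hw i₁ (Ne.symm hk.1) (Ne.symm hl.1)) hwt hwu
  have e₂ := h₂.mk_flipCoord_mem (hw i₂ (Ne.symm hk.2) (Ne.symm hl.2)) hwt hwu
  exact hne (eq_of_flipCoord_eq_flipCoord (hM.eq_of_mk_mem e₁ e₂))

end HalfLayer

section ConjectureB

variable {n : ℕ} {M : Set (Sym2 (Fin n → Bool))} {u : Fin n → Bool}

lemma setOf_condC2_subsingleton (hn : 4 ≤ n) (hM : IsMatchingOn (Qc n) M) :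
    {v | CondC2 M u v}.Subsingleton := by
  rintro _ ⟨i, rfl, hi, -⟩ _ ⟨j, rfl, hj, -⟩
  rw [ContainsAvoidingAlmostHalfLayer.unique hn hM hi hj]

lemma setOf_condC3_subsingleton (hM : IsMatchingOn (Qc n) M) :
    {v | CondC3 M u v}.Subsingleton :=
  fun _ hv _ hw => hM.eq_of_mk_mem hv hw

lemma extendsHamPath_iff_of_conjB (hn : n ≠ 0) (hM : IsMatchingOn (Qc n) M) (hB : ConjB n)
    {v : Fin n → Bool} : ExtendsHamPath (Qc n) M u v ↔ wt v ≠ wt u ∧ NoneC M u v := by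
  refine ⟨fun h => ?_, fun ⟨hwt, hC⟩ => (hB M hM u v hwt.symm).mpr hC⟩
  have hwt : wt v ≠ wt u := by
    obtain ⟨p, hp, -⟩ := h
    rw [wt_eq_add_one_of_isHamiltonian hn hp, ZMod.add_one_ne_iff_eq]
  exact ⟨hwt, (hB M hM u v hwt.symm).mp h⟩

lemma noneC_iff_not_coveredBy_halfLayer (hn : 4 ≤ n) (hM : IsMatchingOn (Qc n) M)
    {i : Fin n} {p : ZMod 2} (hsub : halfLayer n i p ⊆ M) (hu : coveredBy (halfLayer n i p) u)
    {v : Fin n → Bool} : NoneC M u v ↔ ¬ coveredBy (halfLayer n i p) v := by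
  refine ⟨fun hC hv => hC.1 ⟨i, p, hsub, hu, hv⟩, fun hv => ⟨?_, ?_, ?_⟩⟩
  all_goals obtain ⟨e, he, hue⟩ := hu
  · rintro ⟨j, q, hsub', ⟨e', he', hue'⟩, hv'⟩
    obtain ⟨rfl, rfl⟩ := eq_and_eq_of_mem_halfLayer_of_mem_halfLayer he'
      (hM.eq_of_mem_of_mem (hsub' he') (hsub he) hue' hue ▸ he)
    exact hv hv'
  · rintro ⟨j, rfl, hj, -⟩
    obtain rfl := ContainsAvoidingAlmostHalfLayer.unique hn hM hj
      (containsAvoidingAlmostHalfLayer_of_subset hsub ⟨e, he, hue⟩)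
    exact hv ⟨e, he, eq_of_mem_halfLayer he hue ▸ Sym2.mem_mk_right _ _⟩
  · intro hC3
    exact hv ⟨e, he, hM.eq_of_mem_of_mem hC3 (hsub he) (Sym2.mem_mk_left _ _) hue ▸
      Sym2.mem_mk_right _ _⟩

lemma ncard_setOf_wt_ne_and_not_coveredBy_halfLayer (hn : 2 ≤ n) {i : Fin n} {p : ZMod 2}
    (hu : coveredBy (halfLayer n i p) u) :
    {v | wt v ≠ wt u ∧ ¬ coveredBy (halfLayer n i p) v}.ncard = 2 ^ (n - 2) := by
  obtain ⟨k, hk⟩ : ∃ k, k ≠ i := Fintype.exists_ne_of_one_lt_card (by simp; omega) i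
  rw [← ncard_setOf_apply_eq_and_wt_ne hk (u i) (wt u)]
  congr 1
  ext v
  rw [coveredBy_halfLayer_iff] at hu
  simp only [Set.mem_ofPred_eq, coveredBy_halfLayer_iff, hu]
  clear hu
  generalize wt v = a
  cases u i <;> cases v i <;> revert a p <;> decide

lemma setOf_not_noneC_subset
    (hH : ¬ ∃ (i : Fin n) (p : ZMod 2), halfLayer n i p ⊆ M ∧ coveredBy (halfLayer n i p) u) :
    {v | ¬ NoneC M u v} ⊆ {v | CondC2 M u v} ∪ {v | CondC3 M u v} := by
  intro v hv
  simp only [Set.mem_ofPred_eq, NoneC, not_and_or, not_not] at hv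
  rcases hv with ⟨i, p, hsub, hu, -⟩ | hC2 | hC3
  · exact absurd ⟨i, p, hsub, hu⟩ hH
  · exact Or.inl hC2
  · exact Or.inr hC3

lemma two_pow_sub_two_le_ncard_setOf_extendsHamPath (hn : 4 ≤ n) (hM : IsMatchingOn (Qc n) M)
    (hB : ConjB n)
    (hH : ¬ ∃ (i : Fin n) (p : ZMod 2), halfLayer n i p ⊆ M ∧ coveredBy (halfLayer n i p) u) :
    2 ^ (n - 1) - 2 ≤ {v | ExtendsHamPath (Qc n) M u v}.ncard := by
  have hbad : {v | ¬ NoneC M u v}.ncard ≤ 2 :=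
    calc _ ≤ ({v | CondC2 M u v} ∪ {v | CondC3 M u v}).ncard :=
          Set.ncard_le_ncard (setOf_not_noneC_subset hH)
      _ ≤ {v | CondC2 M u v}.ncard + {v | CondC3 M u v}.ncard := Set.ncard_union_le _ _
      _ ≤ 1 + 1 := add_le_add
          (Set.ncard_le_one_iff_subsingleton.mpr (setOf_condC2_subsingleton hn hM))
          (Set.ncard_le_one_iff_subsingleton.mpr (setOf_condC3_subsingleton hM))
  have hT : {v | ExtendsHamPath (Qc n) M u v} = {v | wt v ≠ wt u} \ {v | ¬ NoneC M u v} := by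
    ext v
    simp [extendsHamPath_iff_of_conjB (by omega) hM hB]
  rw [hT, ← ncard_setOf_wt_ne (by omega) (wt u)]
  exact (Nat.sub_le_sub_left hbad _).trans (Set.le_ncard_sdiff _ _)

end ConjectureB

/-- For `n ≥ 5`, a matching `M` of `Q_n` and a vertex `u`, assuming Conjecture B for
dimension `n`: `|T^M_u| ≥ 2^{n-2}`; equality holds iff `M` contains a half-layer covering
`u`, in which case `T^M_u` consists exactly of the vertices of parity opposite to `u` not
covered by that half-layer; otherwise `|T^M_u| ≥ 2^{n-1} - 2`. -/
theorem stmt6 (n : ℕ) (hn : 5 ≤ n) (M : Set (Sym2 (Fin n → Bool)))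
    (hM : IsMatchingOn (Qc n) M) (u : Fin n → Bool) (hB : ConjB n) :
    2 ^ (n - 2) ≤ {v | ExtendsHamPath (Qc n) M u v}.ncard ∧
    ({v | ExtendsHamPath (Qc n) M u v}.ncard = 2 ^ (n - 2) ↔
      ∃ (i : Fin n) (p : ZMod 2), halfLayer n i p ⊆ M ∧ coveredBy (halfLayer n i p) u) ∧
    (∀ (i : Fin n) (p : ZMod 2), halfLayer n i p ⊆ M → coveredBy (halfLayer n i p) u →
      {v | ExtendsHamPath (Qc n) M u v}
        = {v | wt v ≠ wt u ∧ ¬ coveredBy (halfLayer n i p) v}) ∧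
    ((¬ ∃ (i : Fin n) (p : ZMod 2), halfLayer n i p ⊆ M ∧ coveredBy (halfLayer n i p) u) →
      2 ^ (n - 1) - 2 ≤ {v | ExtendsHamPath (Qc n) M u v}.ncard) := by
  have hT : ∀ i p, halfLayer n i p ⊆ M → coveredBy (halfLayer n i p) u →
      {v | ExtendsHamPath (Qc n) M u v} = {v | wt v ≠ wt u ∧ ¬ coveredBy (halfLayer n i p) v} :=
    fun i p hsub hu => Set.ext fun v => by
      rw [Set.mem_ofPred_eq, extendsHamPath_iff_of_conjB (by omega) hM hB,
        noneC_iff_not_coveredBy_halfLayer (by omega) hM hsub hu]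
      rfl
  by_cases hH : ∃ (i : Fin n) (p : ZMod 2), halfLayer n i p ⊆ M ∧ coveredBy (halfLayer n i p) u
  · obtain ⟨i, p, hsub, hu⟩ := hH
    have hcard : {v | ExtendsHamPath (Qc n) M u v}.ncard = 2 ^ (n - 2) := by
      rw [hT i p hsub hu, ncard_setOf_wt_ne_and_not_coveredBy_halfLayer (by omega) hu]
    exact ⟨hcard.ge, iff_of_true hcard ⟨i, p, hsub, hu⟩, hT, fun h => (h ⟨i, p, hsub, hu⟩).elim⟩
  · have hcard := two_pow_sub_two_le_ncard_setOf_extendsHamPath (by omega) hM hB hH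
    have hgap : 2 ^ (n - 2) + 2 < 2 ^ (n - 1) := by
      obtain ⟨m, rfl⟩ : ∃ m, n = m + 4 := ⟨n - 4, by omega⟩
      simp only [show m + 4 - 1 = m + 3 by omega, show m + 4 - 2 = m + 2 by omega, pow_succ]
      have := Nat.one_le_two_pow (n := m)
      omega
    exact ⟨by omega, iff_of_false (by omega) hH, fun i p hsub hu => (hH ⟨i, p, hsub, hu⟩).elim,
      fun _ => hcard⟩
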